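/- For every g ∈ SL_2(ℂ) there exist x, y ∈ SL_2(ℂ) such that, setting z = x·y·x⁻¹·y⁻¹, one has z·(x·z·x⁻¹)·z⁻¹·(x·z⁻¹·x⁻¹) = g or z·(x·z·x⁻¹)·z⁻¹·(x·z⁻¹·x⁻¹) = −g. Equivalently, the word map on PSL_2(ℂ) = SL_2(ℂ)/{±I} induced by the word w(x,y) = ⁅⁅x,y⁆, x⁅x,y⁆x⁻¹⁆ is surjective. -/

import Mathlib

/-!
The word is `⁅z, x z x⁻¹⁆` with `z = ⁅x, y⁆`, so its set of values is closed under conjugation,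
and `w(1, 1) = 1` takes care of `g = ±1`. Over an algebraically closed field, two elements of
`SL₂` other than `±1` with the same trace are conjugate: each is conjugate in `GL₂` to the
companion matrix of its trace (through a cyclic vector), and rescaling the conjugating matrix by a
square root of its determinant moves it into `SL₂`. It therefore suffices to realise every trace
`τ ≠ -2` by a word value other than `±1` (for trace `-2` replace `g` by `-g`). Along the family
`x = diag(2, 1/2)`, `y = [[1 + t, t], [1, 1]]` the word has trace `2 + (135/16)² t² (1 + t)`,
a cubic in `t` that takes every value, and at `t = -1` it is a nontrivial unipotent matrix.
-/

open Matrix MatrixGroups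
open scoped commutatorElement

section Word

variable {G : Type*} [Group G]

def doubleCommutatorWord (x y : G) : G := ⁅⁅x, y⁆, x * ⁅x, y⁆ * x⁻¹⁆

@[simp]
lemma doubleCommutatorWord_one_one : doubleCommutatorWord (1 : G) 1 = 1 := by
  simp [doubleCommutatorWord]

lemma conj_doubleCommutatorWord (c x y : G) :
    c * doubleCommutatorWord x y * c⁻¹ = doubleCommutatorWord (c * x * c⁻¹) (c * y * c⁻¹) := by
  simp only [doubleCommutatorWord, commutatorElement_def]
  group

lemma IsConj.exists_doubleCommutatorWord_eq {x y g : G} (h : IsConj (doubleCommutatorWord x y) g) :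
    ∃ x' y', doubleCommutatorWord x' y' = g := by
  obtain ⟨c, rfl⟩ := isConj_iff.1 h
  exact ⟨_, _, (conj_doubleCommutatorWord c x y).symm⟩

end Word

namespace Matrix.SpecialLinearGroup

lemma coe_commutatorElement {n R : Type*} [Fintype n] [DecidableEq n] [CommRing R]
    (A B : SpecialLinearGroup n R) :
    ((⁅A, B⁆ : SpecialLinearGroup n R) : Matrix n n R) =
      (A : Matrix n n R) * B * adjugate (A : Matrix n n R) * adjugate (B : Matrix n n R) := by
  rw [commutatorElement_def, coe_mul, coe_mul, coe_mul, coe_inv, coe_inv]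

theorem isConj_of_mul_eq_mul {n K : Type*} [Fintype n] [DecidableEq n] [Field K] [IsAlgClosed K]
    {A B : SpecialLinearGroup n K} {P : Matrix n n K} (hP : P.det ≠ 0)
    (h : (A : Matrix n n K) * P = P * B) : IsConj A B := by
  obtain ⟨r, hr⟩ : ∃ r : K, r ^ Fintype.card n = P.det := by
    rcases (Fintype.card n).eq_zero_or_pos with hn | hn
    · have := Fintype.card_eq_zero_iff.1 hn
      exact ⟨1, by simp⟩
    · exact IsAlgClosed.exists_pow_nat_eq P.det hn
  let Q : SpecialLinearGroup n K := ⟨r⁻¹ • P, by rw [det_smul, inv_pow, hr, inv_mul_cancel₀ hP]⟩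
  refine isConj_iff.2 ⟨Q⁻¹, ?_⟩
  rw [inv_inv, mul_assoc, inv_mul_eq_iff_eq_mul]
  refine Subtype.ext ?_
  change (A : Matrix n n K) * (r⁻¹ • P) = (r⁻¹ • P) * B
  rw [Matrix.mul_smul, Matrix.smul_mul, h]

variable {K : Type*} [Field K]

def companion (τ : K) : SL(2, K) := ⟨!![0, -1; 1, τ], by simp [det_fin_two_of]⟩

lemma exists_mul_eq_mul_companion (A : SL(2, K)) (h1 : A ≠ 1) (h2 : A ≠ -1) :
    ∃ P : Matrix (Fin 2) (Fin 2) K, P.det ≠ 0 ∧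
      (A : Matrix (Fin 2) (Fin 2) K) * P = P * companion (A : Matrix (Fin 2) (Fin 2) K).trace := by
  induction A using fin_two_induction with | h a b c d hdet => ?_
  have hns : ¬ (b = 0 ∧ c = 0 ∧ a = d) := by
    rintro ⟨rfl, rfl, rfl⟩
    rcases mul_self_eq_one_iff.1 (by linear_combination hdet : a * a = 1) with rfl | rfl
    · exact h1 (Subtype.ext one_fin_two.symm)
    · exact h2 (Subtype.ext (by simp [one_fin_two]))
  obtain ⟨p, q, hpq⟩ : ∃ p q : K, c * p ^ 2 + (d - a) * p * q - b * q ^ 2 ≠ 0 := by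
    by_contra! h
    exact hns ⟨by linear_combination -h 0 1, by linear_combination h 1 0,
      by linear_combination h 0 1 - h 1 1 + h 1 0⟩
  -- `P` has columns `v = (p, q)` and `A v`, its determinant is the quadratic form above, and
  -- `A P = P C` is Cayley–Hamilton `A² v = (tr A) A v - v`
  refine ⟨!![p, a * p + b * q; q, c * p + d * q], ?_, ?_⟩
  · rw [det_fin_two_of]
    convert hpq using 1
    ring
  · rw [companion, coe_mk, coe_mk, trace_fin_two_of, mul_fin_two, mul_fin_two]
    congrm !![?_, ?_; ?_, ?_]
    · ring
    · linear_combination (-p) * hdet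
    · ring
    · linear_combination (-q) * hdet

theorem isConj_of_trace_eq [IsAlgClosed K] {A B : SL(2, K)} (hA1 : A ≠ 1) (hA2 : A ≠ -1)
    (hB1 : B ≠ 1) (hB2 : B ≠ -1)
    (h : (A : Matrix (Fin 2) (Fin 2) K).trace = (B : Matrix (Fin 2) (Fin 2) K).trace) :
    IsConj A B := by
  obtain ⟨P, hP, hAP⟩ := exists_mul_eq_mul_companion A hA1 hA2
  obtain ⟨Q, hQ, hBQ⟩ := exists_mul_eq_mul_companion B hB1 hB2
  rw [h] at hAP
  exact (isConj_of_mul_eq_mul hP hAP).trans (isConj_of_mul_eq_mul hQ hBQ).symm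

section WordFamily

variable [CharZero K]

def wordFamilyX : SL(2, K) := ⟨!![2, 0; 0, 2⁻¹], by simp [det_fin_two_of]⟩

def wordFamilyY (t : K) : SL(2, K) := ⟨!![1 + t, t; 1, 1], by simp [det_fin_two_of]⟩

lemma coe_commutatorElement_wordFamily (t : K) :
    ((⁅(wordFamilyX : SL(2, K)), wordFamilyY t⁆ : SL(2, K)) : Matrix (Fin 2) (Fin 2) K) =
      !![1 - 3 * t, 3 * t + 3 * t ^ 2; -3 / 4, 1 + 3 / 4 * t] := by
  rw [coe_commutatorElement]
  simp only [wordFamilyX, wordFamilyY, coe_mk, adjugate_fin_two_of, mul_fin_two]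
  congrm !![?_, ?_; ?_, ?_] <;> ring

lemma trace_doubleCommutatorWord_wordFamily (t : K) :
    ((doubleCommutatorWord wordFamilyX (wordFamilyY t) : SL(2, K)) :
      Matrix (Fin 2) (Fin 2) K).trace = 2 + (135 / 16) ^ 2 * t ^ 2 * (1 + t) := by
  rw [doubleCommutatorWord, coe_commutatorElement, coe_mul, coe_mul, coe_inv,
    coe_commutatorElement_wordFamily]
  simp only [wordFamilyX, coe_mk, adjugate_fin_two_of, mul_fin_two, trace_fin_two_of]
  ring

lemma coe_doubleCommutatorWord_wordFamily_neg_one :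
    ((doubleCommutatorWord wordFamilyX (wordFamilyY (-1)) : SL(2, K)) :
      Matrix (Fin 2) (Fin 2) K) = !![1, 0; -135 / 1024, 1] := by
  rw [doubleCommutatorWord, coe_commutatorElement, coe_mul, coe_mul, coe_inv,
    coe_commutatorElement_wordFamily]
  simp only [wordFamilyX, coe_mk, adjugate_fin_two_of, mul_fin_two]
  congrm !![?_, ?_; ?_, ?_] <;> ring

variable [IsAlgClosed K]

open Polynomial in
lemma exists_trace_doubleCommutatorWord_wordFamily_eq (τ : K) :
    ∃ t : K, ((doubleCommutatorWord wordFamilyX (wordFamilyY t) : SL(2, K)) :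
      Matrix (Fin 2) (Fin 2) K).trace = τ := by
  have hc : ((135 / 16) ^ 2 : K) ≠ 0 := by norm_num
  obtain ⟨t, ht⟩ := IsAlgClosed.exists_root
    (C ((135 / 16) ^ 2) * X ^ 3 + C ((135 / 16) ^ 2) * X ^ 2 + C 0 * X + C (2 - τ))
    (by rw [degree_cubic hc]; decide)
  refine ⟨t, ?_⟩
  rw [trace_doubleCommutatorWord_wordFamily]
  simp only [IsRoot, eval_add, eval_mul, eval_C, eval_pow, eval_X] at ht
  linear_combination ht

lemma exists_doubleCommutatorWord_ne_one_trace_eq {τ : K} (hτ : τ ≠ -2) :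
    ∃ x y : SL(2, K), doubleCommutatorWord x y ≠ 1 ∧ doubleCommutatorWord x y ≠ -1 ∧
      ((doubleCommutatorWord x y : SL(2, K)) : Matrix (Fin 2) (Fin 2) K).trace = τ := by
  by_cases h2 : τ = 2
  · have hW := coe_doubleCommutatorWord_wordFamily_neg_one (K := K)
    refine ⟨wordFamilyX, wordFamilyY (-1), fun h => ?_, fun h => ?_, ?_⟩
    · have := congrFun (congrFun hW 1) 0
      norm_num [h] at this
    · have := congrFun (congrFun hW 1) 0
      norm_num [h] at this
    · rw [trace_doubleCommutatorWord_wordFamily, h2]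
      ring
  · obtain ⟨t, ht⟩ := exists_trace_doubleCommutatorWord_wordFamily_eq τ
    refine ⟨wordFamilyX, wordFamilyY t, fun h => ?_, fun h => ?_, ht⟩
    · exact h2 (by simpa [h] using ht.symm)
    · exact hτ (by simpa [h] using ht.symm)

lemma exists_doubleCommutatorWord_eq {g : SL(2, K)} (h1 : g ≠ 1) (h2 : g ≠ -1)
    (htr : (g : Matrix (Fin 2) (Fin 2) K).trace ≠ -2) : ∃ x y, doubleCommutatorWord x y = g := by
  obtain ⟨x, y, hw1, hw2, hw⟩ := exists_doubleCommutatorWord_ne_one_trace_eq htr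
  exact (isConj_of_trace_eq hw1 hw2 h1 h2 hw).exists_doubleCommutatorWord_eq

theorem exists_doubleCommutatorWord_eq_or_eq_neg (g : SL(2, K)) :
    ∃ x y, doubleCommutatorWord x y = g ∨ doubleCommutatorWord x y = -g := by
  by_cases h1 : g = 1
  · exact ⟨1, 1, .inl (by simp [h1])⟩
  by_cases h2 : g = -1
  · exact ⟨1, 1, .inr (by simp [h2])⟩
  by_cases htr : (g : Matrix (Fin 2) (Fin 2) K).trace = -2
  · obtain ⟨x, y, h⟩ := exists_doubleCommutatorWord_eq (g := -g)
      (fun h => h2 (neg_eq_iff_eq_neg.1 h)) (fun h => h1 (neg_inj.1 h))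
      (by rw [coe_neg, trace_neg, htr]; norm_num)
    exact ⟨x, y, .inr h⟩
  · obtain ⟨x, y, h⟩ := exists_doubleCommutatorWord_eq h1 h2 htr
    exact ⟨x, y, .inl h⟩

end WordFamily

end Matrix.SpecialLinearGroup

/-- Surjectivity on `PSL₂(ℂ)` of the word map induced by
`w(x,y) = ⁅⁅x,y⁆, x⁅x,y⁆x⁻¹⁆`: for every `g ∈ SL₂(ℂ)` there are `x, y ∈ SL₂(ℂ)` such that,
with `z = ⁅x,y⁆`, the element `z (x z x⁻¹) z⁻¹ (x z⁻¹ x⁻¹)` equals `g` or `-g`. -/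
theorem double_commutator_word_map_surjective_PSL2C (g : Matrix.SpecialLinearGroup (Fin 2) ℂ) :
    ∃ x y : Matrix.SpecialLinearGroup (Fin 2) ℂ, ∀ z : Matrix.SpecialLinearGroup (Fin 2) ℂ,
      z = x * y * x⁻¹ * y⁻¹ →
      ((↑(z * (x * z * x⁻¹) * z⁻¹ * (x * z⁻¹ * x⁻¹)) : Matrix (Fin 2) (Fin 2) ℂ)
          = (↑g : Matrix (Fin 2) (Fin 2) ℂ) ∨
       (↑(z * (x * z * x⁻¹) * z⁻¹ * (x * z⁻¹ * x⁻¹)) : Matrix (Fin 2) (Fin 2) ℂ)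
          = -(↑g : Matrix (Fin 2) (Fin 2) ℂ)) := by
  obtain ⟨x, y, hxy⟩ := SpecialLinearGroup.exists_doubleCommutatorWord_eq_or_eq_neg g
  refine ⟨x, y, fun z hz => ?_⟩
  have hw : z * (x * z * x⁻¹) * z⁻¹ * (x * z⁻¹ * x⁻¹) = doubleCommutatorWord x y := by
    simp only [hz, doubleCommutatorWord, commutatorElement_def]
    group
  rw [hw, ← SpecialLinearGroup.coe_neg]
  exact hxy.imp (congrArg _) (congrArg _)
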